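/- Let z(x) := 1/|x| on ℝ³ and let a, b ∈ H¹(ℝ³;ℂ). Then for almost every x ∈ ℝ³: |((ab)⋆z)(x)| ≤ C_H‖a‖_{L²}‖∇b‖_{L²}, |(((∇a)b)⋆z)(x)| ≤ C_H‖∇a‖_{L²}‖∇b‖_{L²}, and |((a∇b)⋆z)(x)| ≤ C_H‖∇a‖_{L²}‖∇b‖_{L²}, where C_H is the constant in Hardy's inequality ‖f/|x−·|‖_{L²(ℝ³)} ≤ C_H‖∇f‖_{L²(ℝ³)} and ⋆ denotes convolution on ℝ³. -/

import Mathlib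

noncomputable section

/-- Points of `ℝ³`. -/
abbrev E3 := EuclideanSpace ℝ (Fin 3)

open MeasureTheory

/-- `Du` is the weak (distributional) gradient of `u : ℝ³ → ℂ` on the open set `U`:
for every scalar test function `η ∈ C_c^∞(U)` and every direction `v`,
`∫ u ∂_vη = -∫ (Du v) η`. -/
def HasWeakGradOn (u : E3 → ℂ) (Du : E3 → E3 →L[ℝ] ℂ) (U : Set E3) : Prop :=
  ∀ η : E3 → ℝ, ContDiff ℝ (⊤ : ℕ∞) η → HasCompactSupport η → tsupport η ⊆ U →
    ∀ v : E3,
      ∫ x, u x * ((fderiv ℝ η x v : ℝ) : ℂ) = -∫ x, Du x v * ((η x : ℝ) : ℂ)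

/-- `u` belongs to `H¹(ℝ³;ℂ)`, with weak gradient `Du`. -/
def IsH1 (u : E3 → ℂ) (Du : E3 → E3 →L[ℝ] ℂ) : Prop :=
  MemLp u 2 volume ∧ MemLp Du 2 volume ∧ HasWeakGradOn u Du Set.univ

section Aux
open Metric Set

lemma ball_lintegral_fin : ∫⁻ x : E3 in ball (0:E3) 1, ENNReal.ofReal ((‖x‖^2)⁻¹) < ⊤ := by
  have hmeas : Measurable fun x : E3 => (‖x‖^2)⁻¹ := by fun_prop
  rw [lintegral_eq_lintegral_meas_le _ (Filter.Eventually.of_forall fun x => by positivity)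
    hmeas.aemeasurable]
  have hsub : ∀ t : ℝ, 0 < t →
      (volume.restrict (ball (0:E3) 1)) {x : E3 | t ≤ (‖x‖^2)⁻¹}
        ≤ min (volume (ball (0:E3) 1)) (ENNReal.ofReal (Real.sqrt t⁻¹ ^ 3) * volume (ball (0:E3) 1)) := by
    intro t ht
    refine le_min ?_ ?_
    · exact (measure_mono (subset_univ _)).trans_eq (Measure.restrict_apply_univ _)
    · have h1 : {x : E3 | t ≤ (‖x‖^2)⁻¹} ⊆ closedBall (0:E3) (Real.sqrt t⁻¹) := by
        intro x hx
        simp only [mem_setOf_eq] at hx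
        rcases eq_or_ne x 0 with rfl | hx0
        · simp at hx; exact absurd hx (by simpa using ht)
        · have hn : 0 < ‖x‖ := norm_pos_iff.mpr hx0
          have : ‖x‖^2 ≤ t⁻¹ := by
            rw [le_inv_comm₀ ht (by positivity)] at hx
            exact hx
          have := Real.sqrt_le_sqrt this
          rwa [Real.sqrt_sq hn.le, mem_closedBall_zero_iff] at *
      calc (volume.restrict (ball (0:E3) 1)) {x : E3 | t ≤ (‖x‖^2)⁻¹}
          ≤ volume (closedBall (0:E3) (Real.sqrt t⁻¹)) :=
            (Measure.restrict_apply_le _ _).trans (measure_mono h1)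
        _ = ENNReal.ofReal (Real.sqrt t⁻¹ ^ 3) * volume (ball (0:E3) 1) := by
            rw [Measure.addHaar_closedBall _ _ (Real.sqrt_nonneg _)]
            norm_num [finrank_euclideanSpace]
  set V := volume (ball (0:E3) 1) with hV
  have hVfin : V < ⊤ := measure_ball_lt_top
  calc ∫⁻ t in Ioi (0:ℝ), (volume.restrict (ball (0:E3) 1)) {x : E3 | t ≤ (‖x‖^2)⁻¹}
      ≤ ∫⁻ t in Ioc (0:ℝ) 1 ∪ Ioi 1, (volume.restrict (ball (0:E3) 1)) {x : E3 | t ≤ (‖x‖^2)⁻¹} :=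
        lintegral_mono_set Ioi_subset_Ioc_union_Ioi
    _ ≤ (∫⁻ t in Ioc (0:ℝ) 1, (volume.restrict (ball (0:E3) 1)) {x : E3 | t ≤ (‖x‖^2)⁻¹})
        + ∫⁻ t in Ioi (1:ℝ), (volume.restrict (ball (0:E3) 1)) {x : E3 | t ≤ (‖x‖^2)⁻¹} :=
        lintegral_union_le _ _ _
    _ < ⊤ := by
        refine ENNReal.add_lt_top.2 ⟨?_, ?_⟩
        · calc (∫⁻ t in Ioc (0:ℝ) 1, (volume.restrict (ball (0:E3) 1)) {x : E3 | t ≤ (‖x‖^2)⁻¹})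
              ≤ ∫⁻ _t in Ioc (0:ℝ) 1, V := by
                refine setLIntegral_mono' measurableSet_Ioc fun t ht => ?_
                exact ((hsub t ht.1).trans (min_le_left _ _))
            _ < ⊤ := by
                rw [setLIntegral_const]
                exact ENNReal.mul_lt_top hVfin (by simp [Real.volume_Ioc])
        · have hb : ∀ t ∈ Ioi (1:ℝ),
              (volume.restrict (ball (0:E3) 1)) {x : E3 | t ≤ (‖x‖^2)⁻¹}
                ≤ ENNReal.ofReal (t ^ (-(3/2) : ℝ)) * V := by
            intro t ht
            have ht0 : (0:ℝ) < t := lt_trans one_pos ht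
            have heq : Real.sqrt t⁻¹ ^ 3 = t ^ (-(3/2) : ℝ) := by
              rw [Real.sqrt_eq_rpow, ← Real.rpow_natCast ((t⁻¹) ^ ((1:ℝ)/2)) 3,
                ← Real.rpow_mul (by positivity), ← Real.rpow_neg_one t,
                ← Real.rpow_mul ht0.le]
              norm_num
            exact ((hsub t ht0).trans (min_le_right _ _)).trans_eq (by rw [heq])
          calc (∫⁻ t in Ioi (1:ℝ), (volume.restrict (ball (0:E3) 1)) {x : E3 | t ≤ (‖x‖^2)⁻¹})
              ≤ ∫⁻ t in Ioi (1:ℝ), ENNReal.ofReal (t ^ (-(3/2) : ℝ)) * V :=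
                setLIntegral_mono' measurableSet_Ioi hb
            _ = (∫⁻ t in Ioi (1:ℝ), ENNReal.ofReal (t ^ (-(3/2) : ℝ))) * V :=
                lintegral_mul_const' _ _ hVfin.ne
            _ < ⊤ := ENNReal.mul_lt_top
                (IntegrableOn.setLIntegral_lt_top
                  (integrableOn_Ioi_rpow_of_lt (by norm_num) one_pos)) hVfin

lemma ball_lintegral_fin' (y : E3) :
    ∫⁻ x : E3 in ball y 1, ENNReal.ofReal ((‖x - y‖^2)⁻¹)
      = ∫⁻ x : E3 in ball (0:E3) 1, ENNReal.ofReal ((‖x‖^2)⁻¹) := by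
  have h : ∫⁻ x : E3 in ball y 1, ENNReal.ofReal ((‖x - y‖^2)⁻¹)
      = ∫⁻ x : E3, (ball (0:E3) 1).indicator (fun u => ENNReal.ofReal ((‖u‖^2)⁻¹)) (x - y) := by
    rw [← lintegral_indicator measurableSet_ball]
    congr 1
    ext x
    by_cases hx : x ∈ ball y 1
    · have hx' : x - y ∈ ball (0:E3) 1 := by
        simpa [mem_ball, dist_eq_norm] using hx
      simp [hx, hx', Set.indicator_of_mem]
    · have hx' : x - y ∉ ball (0:E3) 1 := by
        simpa [mem_ball, dist_eq_norm] using hx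
      simp [hx, hx', Set.indicator_of_notMem]
  rw [h, lintegral_sub_right_eq_self
    (fun u => (ball (0:E3) 1).indicator (fun u => ENNReal.ofReal ((‖u‖^2)⁻¹)) u) y,
    lintegral_indicator measurableSet_ball]

lemma ae_fin (g : E3 → ℂ) (hg : MeasureTheory.MemLp g 2 volume) :
    ∀ᵐ x : E3, ∫⁻ y, ENNReal.ofReal (‖g y‖^2 / ‖x - y‖^2) < ⊤ := by
  obtain ⟨g', hsm, heq⟩ := hg.1
  have hInt : Integrable (fun y => ‖g y‖^2) := by
    have := hg.integrable_norm_rpow (by norm_num) (by norm_num)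
    simpa [Real.rpow_two] using this
  have hM : (∫⁻ y, ENNReal.ofReal (‖g' y‖^2)) < ⊤ := by
    have h0 : (∫⁻ y, ENNReal.ofReal (‖g y‖^2)) < ⊤ := hInt.lintegral_lt_top
    have : (∫⁻ y, ENNReal.ofReal (‖g y‖^2)) = ∫⁻ y, ENNReal.ofReal (‖g' y‖^2) :=
      lintegral_congr_ae (heq.mono fun y hy => by simp only [hy])
    rwa [this] at h0
  set K0 := ∫⁻ x : E3 in ball (0:E3) 1, ENNReal.ofReal ((‖x‖^2)⁻¹) with hK0
  have hK0fin : K0 < ⊤ := ball_lintegral_fin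
  have hcongr : ∀ x : E3, (∫⁻ y, ENNReal.ofReal (‖g y‖^2 / ‖x - y‖^2))
      = ∫⁻ y, ENNReal.ofReal (‖g' y‖^2 / ‖x - y‖^2) := fun x =>
    lintegral_congr_ae (heq.mono fun y hy => by simp only [hy])
  have hFmeas : Measurable fun p : E3 × E3 => ENNReal.ofReal (‖g' p.2‖^2 / ‖p.1 - p.2‖^2) := by
    apply ENNReal.measurable_ofReal.comp
    exact ((hsm.measurable.norm.pow_const 2).comp measurable_snd).div
      (((measurable_fst.sub measurable_snd).norm.pow_const 2))
  refine ae_of_forall_measure_lt_top_ae_restrict _ fun s hs hμs => ?_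
  have hHmeas : Measurable fun x : E3 => ∫⁻ y, ENNReal.ofReal (‖g' y‖^2 / ‖x - y‖^2) :=
    hFmeas.lintegral_prod_right'
  have hfin : (∫⁻ x in s, ∫⁻ y, ENNReal.ofReal (‖g' y‖^2 / ‖x - y‖^2)) < ⊤ := by
    rw [lintegral_lintegral_swap (hFmeas.aemeasurable)]
    have hinner : ∀ y : E3, (∫⁻ x in s, ENNReal.ofReal (‖g' y‖^2 / ‖x - y‖^2))
        ≤ ENNReal.ofReal (‖g' y‖^2) * (volume s + K0) := by
      intro y
      have step1 : ∀ x : E3, ENNReal.ofReal (‖g' y‖^2 / ‖x - y‖^2)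
          = ENNReal.ofReal (‖g' y‖^2) * ENNReal.ofReal ((‖x - y‖^2)⁻¹) := by
        intro x
        rw [div_eq_mul_inv, ENNReal.ofReal_mul (by positivity)]
      calc (∫⁻ x in s, ENNReal.ofReal (‖g' y‖^2 / ‖x - y‖^2))
          = ENNReal.ofReal (‖g' y‖^2) * ∫⁻ x in s, ENNReal.ofReal ((‖x - y‖^2)⁻¹) := by
            simp_rw [step1]
            exact lintegral_const_mul _ (by fun_prop)
        _ ≤ ENNReal.ofReal (‖g' y‖^2) * (volume s + K0) := by
            gcongr
            calc (∫⁻ x in s, ENNReal.ofReal ((‖x - y‖^2)⁻¹))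
                ≤ ∫⁻ x in s, (1 + (ball y 1).indicator
                    (fun x => ENNReal.ofReal ((‖x - y‖^2)⁻¹)) x) := by
                  refine lintegral_mono fun x => ?_
                  by_cases hx : x ∈ ball y 1
                  · rw [Set.indicator_of_mem hx]
                    exact le_add_self
                  · have h1 : 1 ≤ ‖x - y‖ := by
                      by_contra hlt
                      exact hx (by simpa [mem_ball, dist_eq_norm] using lt_of_not_ge hlt)
                    have : (‖x - y‖^2)⁻¹ ≤ 1 := by
                      rw [inv_le_one_iff₀]
                      right; nlinarith
                    calc ENNReal.ofReal ((‖x - y‖^2)⁻¹) ≤ ENNReal.ofReal 1 :=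
                          ENNReal.ofReal_le_ofReal this
                      _ ≤ _ := by simp
              _ = volume s + ∫⁻ x in s, (ball y 1).indicator
                    (fun x => ENNReal.ofReal ((‖x - y‖^2)⁻¹)) x := by
                  rw [lintegral_add_left measurable_const]
                  simp
              _ ≤ volume s + K0 := by
                  gcongr
                  calc (∫⁻ x in s, (ball y 1).indicator
                        (fun x => ENNReal.ofReal ((‖x - y‖^2)⁻¹)) x)
                      ≤ ∫⁻ x, (ball y 1).indicator
                        (fun x => ENNReal.ofReal ((‖x - y‖^2)⁻¹)) x :=
                        setLIntegral_le_lintegral _ _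
                    _ = ∫⁻ x in ball y 1, ENNReal.ofReal ((‖x - y‖^2)⁻¹) :=
                        lintegral_indicator measurableSet_ball _
                    _ = K0 := ball_lintegral_fin' y
    calc (∫⁻ y, ∫⁻ x in s, ENNReal.ofReal (‖g' y‖^2 / ‖x - y‖^2))
        ≤ ∫⁻ y, ENNReal.ofReal (‖g' y‖^2) * (volume s + K0) := lintegral_mono hinner
      _ = (∫⁻ y, ENNReal.ofReal (‖g' y‖^2)) * (volume s + K0) :=
          lintegral_mul_const' _ _ (by finiteness)
      _ < ⊤ := ENNReal.mul_lt_top hM (by finiteness)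
  have := ae_lt_top hHmeas hfin.ne
  filter_upwards [this] with x hx
  rw [hcongr x]
  exact hx

lemma CS_est (f g : E3 → ℂ) (F : E3 → ℝ)
    (hfF : ∀ y, ‖f y‖ ≤ F y) (hF0 : ∀ y, 0 ≤ F y)
    (hFm : AEStronglyMeasurable F volume) (IF : Integrable (fun y => F y ^ 2))
    (hg : AEStronglyMeasurable g volume)
    (x : E3) (hfin : (∫⁻ y, ENNReal.ofReal (‖g y‖^2 / ‖x - y‖^2)) < ⊤)
    (C : ℝ) (hC : 0 ≤ C) (hHg : ∫ y, ‖g y‖^2 / ‖x - y‖^2 ≤ C^2) :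
    ‖∫ y, f y * g y / ((‖x - y‖ : ℝ) : ℂ)‖ ≤ Real.sqrt (∫ y, F y ^ 2) * C := by
  by_cases hI : Integrable (fun y => f y * g y / ((‖x - y‖ : ℝ) : ℂ)) volume
  swap
  · rw [integral_undef hI, norm_zero]
    exact mul_nonneg (Real.sqrt_nonneg _) hC
  have hRHS0 : 0 ≤ Real.sqrt (∫ y, F y ^ 2) * C := mul_nonneg (Real.sqrt_nonneg _) hC
  refine (norm_integral_le_integral_norm _).trans ?_
  rw [← ENNReal.ofReal_le_ofReal_iff hRHS0,
    ofReal_integral_eq_lintegral_ofReal hI.norm (Filter.Eventually.of_forall fun y => norm_nonneg _)]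
  -- pointwise: norm of integrand
  have hnorm : ∀ y : E3, ‖f y * g y / ((‖x - y‖ : ℝ) : ℂ)‖ = ‖f y‖ * (‖g y‖ / ‖x - y‖) := by
    intro y
    rw [norm_div, norm_mul, Complex.norm_real, Real.norm_of_nonneg (norm_nonneg _), mul_div_assoc]
  -- the two ENNReal factors
  set u : E3 → ENNReal := fun y => ENNReal.ofReal (F y)
  set v : E3 → ENNReal := fun y => ENNReal.ofReal (‖g y‖ / ‖x - y‖)
  have hu : AEMeasurable u volume := ENNReal.measurable_ofReal.comp_aemeasurable hFm.aemeasurable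
  have hv : AEMeasurable v volume := by
    apply ENNReal.measurable_ofReal.comp_aemeasurable
    exact hg.norm.aemeasurable.div ((measurable_const.sub measurable_id).norm).aemeasurable
  have hCS := ENNReal.lintegral_mul_le_Lp_mul_Lq volume
    (Real.HolderConjugate.two_two) hu hv
  have hptle : (∫⁻ y, ENNReal.ofReal ‖f y * g y / ((‖x - y‖ : ℝ) : ℂ)‖) ≤ ∫⁻ y, (u * v) y := by
    refine lintegral_mono fun y => ?_
    rw [hnorm y]
    calc ENNReal.ofReal (‖f y‖ * (‖g y‖ / ‖x - y‖))
        ≤ ENNReal.ofReal (F y * (‖g y‖ / ‖x - y‖)) := by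
          refine ENNReal.ofReal_le_ofReal ?_
          have : 0 ≤ ‖g y‖ / ‖x - y‖ := by positivity
          exact mul_le_mul_of_nonneg_right (hfF y) this
      _ = u y * v y := ENNReal.ofReal_mul (hF0 y)
      _ = (u * v) y := rfl
  -- compute the Lp factors
  have hu2 : (∫⁻ y, u y ^ (2:ℝ)) = ENNReal.ofReal (∫ y, F y ^ 2) := by
    have : ∀ y : E3, u y ^ (2:ℝ) = ENNReal.ofReal (F y ^ 2) := fun y => by
      rw [ENNReal.ofReal_rpow_of_nonneg (hF0 y) (by norm_num), Real.rpow_two]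
    simp_rw [this]
    rw [← ofReal_integral_eq_lintegral_ofReal IF
      (Filter.Eventually.of_forall fun y => sq_nonneg _)]
  have hv2 : (∫⁻ y, v y ^ (2:ℝ)) = ∫⁻ y, ENNReal.ofReal (‖g y‖^2 / ‖x - y‖^2) := by
    refine lintegral_congr fun y => ?_
    rw [ENNReal.ofReal_rpow_of_nonneg (by positivity) (by norm_num), Real.rpow_two, div_pow]
  -- identify the v² lintegral with the real integral, bounded by C²
  have hgm2 : AEStronglyMeasurable (fun y => ‖g y‖^2 / ‖x - y‖^2) volume := by
    apply AEMeasurable.aestronglyMeasurable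
    exact ((hg.norm.aemeasurable.pow_const 2).div
      (((measurable_const.sub measurable_id).norm.pow_const 2)).aemeasurable)
  have hgint : Integrable (fun y => ‖g y‖^2 / ‖x - y‖^2) volume := by
    refine ⟨hgm2, ?_⟩
    rw [hasFiniteIntegral_iff_ofReal (Filter.Eventually.of_forall fun y => by positivity)]
    exact hfin
  have hv2' : (∫⁻ y, v y ^ (2:ℝ)) = ENNReal.ofReal (∫ y, ‖g y‖^2 / ‖x - y‖^2) := by
    rw [hv2, ← ofReal_integral_eq_lintegral_ofReal hgint
      (Filter.Eventually.of_forall fun y => by positivity)]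
  have hvle : (∫⁻ y, v y ^ (2:ℝ)) ^ ((1:ℝ)/2) ≤ ENNReal.ofReal C := by
    rw [hv2']
    calc (ENNReal.ofReal (∫ y, ‖g y‖^2 / ‖x - y‖^2)) ^ ((1:ℝ)/2)
        ≤ (ENNReal.ofReal (C^2)) ^ ((1:ℝ)/2) := by
          gcongr
      _ = ENNReal.ofReal C := by
          rw [ENNReal.ofReal_rpow_of_nonneg (by positivity) (by norm_num)]
          congr 1
          rw [← Real.rpow_natCast C 2, ← Real.rpow_mul hC]
          norm_num
  have hule : (∫⁻ y, u y ^ (2:ℝ)) ^ ((1:ℝ)/2) = ENNReal.ofReal (Real.sqrt (∫ y, F y ^ 2)) := by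
    rw [hu2, ENNReal.ofReal_rpow_of_nonneg (integral_nonneg fun y => sq_nonneg _) (by norm_num),
      Real.sqrt_eq_rpow]
  calc (∫⁻ y, ENNReal.ofReal ‖f y * g y / ((‖x - y‖ : ℝ) : ℂ)‖)
      ≤ ∫⁻ y, (u * v) y := hptle
    _ ≤ (∫⁻ y, u y ^ (2:ℝ)) ^ ((1:ℝ)/2) * (∫⁻ y, v y ^ (2:ℝ)) ^ ((1:ℝ)/2) := hCS
    _ ≤ ENNReal.ofReal (Real.sqrt (∫ y, F y ^ 2)) * ENNReal.ofReal C := by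
        rw [hule]; gcongr
    _ = ENNReal.ofReal (Real.sqrt (∫ y, F y ^ 2) * C) :=
        (ENNReal.ofReal_mul (Real.sqrt_nonneg _)).symm

lemma sq_int {α : Type*} [NormedAddCommGroup α] (g : E3 → α)
    (hg : MeasureTheory.MemLp g 2 volume) : Integrable (fun y => ‖g y‖^2) volume := by
  have := hg.integrable_norm_rpow (by norm_num) (by norm_num)
  simpa [Real.rpow_two] using this

end Aux

/-- estimates (40) in the proof of Lemma 5.1: for `z(x) = 1/|x|`
and `a, b ∈ H¹(ℝ³;ℂ)` (with weak gradients `Da, Db`), for a.e. `x ∈ ℝ³`: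
`|((ab)⋆z)(x)| ≤ C_H‖a‖_{L²}‖∇b‖_{L²}`, `|(((∇a)b)⋆z)(x)| ≤ C_H‖∇a‖_{L²}‖∇b‖_{L²}` and
`|((a∇b)⋆z)(x)| ≤ C_H‖∇a‖_{L²}‖∇b‖_{L²}`, where `C_H` is the constant of Hardy's
inequality `‖f/|x−·|‖_{L²(ℝ³)} ≤ C_H‖∇f‖_{L²(ℝ³)}`. -/
theorem stmt_12
    (a b : E3 → ℂ) (Da Db : E3 → E3 →L[ℝ] ℂ)
    (ha : IsH1 a Da) (hb : IsH1 b Db)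
    -- `C_H` is the constant in Hardy's inequality
    (CH : ℝ) (hCH : 0 < CH)
    (hHardy : ∀ (f : E3 → ℂ) (Df : E3 → E3 →L[ℝ] ℂ), IsH1 f Df → ∀ x : E3,
      ∫ y, ‖f y‖ ^ 2 / ‖x - y‖ ^ 2 ≤ CH ^ 2 * ∫ y, ‖Df y‖ ^ 2) :
    ∀ᵐ x : E3,
      -- `|((ab)⋆z)(x)| ≤ C_H ‖a‖_{L²} ‖∇b‖_{L²}`
      (‖∫ y, a y * b y / ((‖x - y‖ : ℝ) : ℂ)‖ ≤
          CH * Real.sqrt (∫ y, ‖a y‖ ^ 2) * Real.sqrt (∫ y, ‖Db y‖ ^ 2)) ∧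
      -- `|(((∇a)b)⋆z)(x)| ≤ C_H ‖∇a‖_{L²} ‖∇b‖_{L²}` (directionally, `‖v‖ ≤ 1`)
      (∀ v : E3, ‖v‖ ≤ 1 →
        ‖∫ y, Da y v * b y / ((‖x - y‖ : ℝ) : ℂ)‖ ≤
          CH * Real.sqrt (∫ y, ‖Da y‖ ^ 2) * Real.sqrt (∫ y, ‖Db y‖ ^ 2)) ∧
      -- `|((a∇b)⋆z)(x)| ≤ C_H ‖∇a‖_{L²} ‖∇b‖_{L²}` (directionally, `‖v‖ ≤ 1`)
      (∀ v : E3, ‖v‖ ≤ 1 →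
        ‖∫ y, a y * Db y v / ((‖x - y‖ : ℝ) : ℂ)‖ ≤
          CH * Real.sqrt (∫ y, ‖Da y‖ ^ 2) * Real.sqrt (∫ y, ‖Db y‖ ^ 2)) := by
  have DAnn : 0 ≤ ∫ y, ‖Da y‖ ^ 2 := integral_nonneg fun y => sq_nonneg _
  have DBnn : 0 ≤ ∫ y, ‖Db y‖ ^ 2 := integral_nonneg fun y => sq_nonneg _
  filter_upwards [ae_fin b hb.1, ae_fin a ha.1] with x hxb hxa
  have hHb : ∀ x : E3, ∫ y, ‖b y‖ ^ 2 / ‖x - y‖ ^ 2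
      ≤ (CH * Real.sqrt (∫ y, ‖Db y‖ ^ 2))^2 := by
    intro x
    rw [mul_pow, Real.sq_sqrt DBnn]
    exact hHardy b Db hb x
  have hHa : ∀ x : E3, ∫ y, ‖a y‖ ^ 2 / ‖x - y‖ ^ 2
      ≤ (CH * Real.sqrt (∫ y, ‖Da y‖ ^ 2))^2 := by
    intro x
    rw [mul_pow, Real.sq_sqrt DAnn]
    exact hHardy a Da ha x
  refine ⟨?_, ?_, ?_⟩
  · have := CS_est a b (fun y => ‖a y‖) (fun y => le_refl _) (fun y => norm_nonneg _)
      ha.1.1.norm (sq_int a ha.1) hb.1.1 x hxb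
      (CH * Real.sqrt (∫ y, ‖Db y‖ ^ 2)) (by positivity) (hHb x)
    exact this.trans_eq (by ring)
  · intro v hv
    have := CS_est (fun y => Da y v) b (fun y => ‖Da y‖)
      (fun y => ((Da y).le_opNorm v).trans (mul_le_of_le_one_right (norm_nonneg _) hv))
      (fun y => norm_nonneg _) ha.2.1.1.norm (sq_int Da ha.2.1) hb.1.1 x hxb
      (CH * Real.sqrt (∫ y, ‖Db y‖ ^ 2)) (by positivity) (hHb x)
    exact this.trans_eq (by ring)
  · intro v hv
    have hcomm : (fun y => a y * Db y v / ((‖x - y‖ : ℝ) : ℂ))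
        = fun y => Db y v * a y / ((‖x - y‖ : ℝ) : ℂ) := by
      funext y; ring
    rw [hcomm]
    have := CS_est (fun y => Db y v) a (fun y => ‖Db y‖)
      (fun y => ((Db y).le_opNorm v).trans (mul_le_of_le_one_right (norm_nonneg _) hv))
      (fun y => norm_nonneg _) hb.2.1.1.norm (sq_int Db hb.2.1) ha.1.1 x hxa
      (CH * Real.sqrt (∫ y, ‖Da y‖ ^ 2)) (by positivity) (hHa x)
    exact this.trans_eq (by ring)
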